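/- arXiv:2506.13686 — 7 statements merged into one kernel-verified Lean document; each statement's English description precedes it below -/
import Mathlib

section
/- For any two probability distributions μ and ν on a finite set and any 0 < α < β < 1, the Hellinger-λ divergences satisfy (α/β)·H_β(μ,ν) ≤ H_α(μ,ν) ≤ ((1-α)/(1-β))·H_β(μ,ν). -/
open Real Finset

/-- Hellinger-λ affinity between two distributions on a finite set. -/
noncomputable def betaAff {X : Type*} [Fintype X] (l : ℝ) (P Q : X → ℝ) : ℝ :=
  ∑ x, P x ^ l * Q x ^ (1 - l)

/-- Hellinger-λ divergence. -/
noncomputable def hellinger {X : Type*} [Fintype X] (l : ℝ) (P Q : X → ℝ) : ℝ :=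
  1 - betaAff l P Q

/-
For `α ≤ β` the summand `a^α b^(1-α)` is the weighted geometric mean of `a^β b^(1-β)` and `b`
with weights `α/β` and `1 - α/β`, so weighted AM-GM and `∑ ν = 1` give
`1 - H_α ≤ (α/β)(1 - H_β) + (1 - α/β)`, which is the left inequality. The right one is the left
one for the pair `(ν, μ)` and exponents `1 - β < 1 - α`, since `H_λ(μ, ν) = H_{1-λ}(ν, μ)`.
-/

lemma rpow_mul_rpow_one_sub_le {a b α β : ℝ} (ha : 0 ≤ a) (hb : 0 ≤ b)
    (hα : 0 < α) (hαβ : α ≤ β) (hα1 : α ≠ 1) :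
    a ^ α * b ^ (1 - α) ≤ (α / β) * (a ^ β * b ^ (1 - β)) + (1 - α / β) * b := by
  have hβ : 0 < β := hα.trans_le hαβ
  have hweight : α / β ≤ 1 := (div_le_one hβ).2 hαβ
  have hexp : (1 - β) * (α / β) + (1 - α / β) = 1 - α := by field_simp; ring
  have hmean : a ^ α * b ^ (1 - α) = (a ^ β * b ^ (1 - β)) ^ (α / β) * b ^ (1 - α / β) := by
    rw [mul_rpow (by positivity) (by positivity), ← rpow_mul ha, ← rpow_mul hb, mul_assoc,
      ← rpow_add' hb (by rw [hexp]; exact sub_ne_zero.2 hα1.symm), hexp,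
      mul_div_cancel₀ α hβ.ne']
  rw [hmean]
  exact geom_mean_le_arith_mean2_weighted (by positivity) (by linarith) (by positivity) hb
    (by ring)

lemma div_mul_hellinger_le_hellinger {X : Type*} [Fintype X] (μ ν : X → ℝ)
    (hμ0 : ∀ x, 0 ≤ μ x) (hν0 : ∀ x, 0 ≤ ν x) (hν1 : ∑ x, ν x = 1) {α β : ℝ}
    (hα : 0 < α) (hαβ : α ≤ β) (hα1 : α ≠ 1) :
    (α / β) * hellinger β μ ν ≤ hellinger α μ ν := by
  have haff : betaAff α μ ν ≤ (α / β) * betaAff β μ ν + (1 - α / β) := calc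
    betaAff α μ ν ≤ ∑ x, ((α / β) * (μ x ^ β * ν x ^ (1 - β)) + (1 - α / β) * ν x) :=
      sum_le_sum fun x _ => rpow_mul_rpow_one_sub_le (hμ0 x) (hν0 x) hα hαβ hα1
    _ = (α / β) * betaAff β μ ν + (1 - α / β) := by
      rw [sum_add_distrib, ← mul_sum, ← mul_sum, hν1, mul_one, betaAff]
  rw [hellinger, hellinger]
  linarith

lemma hellinger_one_sub_comm {X : Type*} [Fintype X] (l : ℝ) (P Q : X → ℝ) :
    hellinger (1 - l) Q P = hellinger l P Q := by
  simp only [hellinger, betaAff, sub_sub_cancel]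
  exact congrArg (1 - ·) (sum_congr rfl fun _ _ => mul_comm _ _)

theorem hellinger_lambda_comparison {X : Type*} [Fintype X]
    (μ ν : X → ℝ) (hμ0 : ∀ x, 0 ≤ μ x) (hν0 : ∀ x, 0 ≤ ν x)
    (hμ1 : ∑ x, μ x = 1) (hν1 : ∑ x, ν x = 1)
    (α β : ℝ) (hα : 0 < α) (hαβ : α < β) (hβ : β < 1) :
    (α / β) * hellinger β μ ν ≤ hellinger α μ ν ∧
      hellinger α μ ν ≤ ((1 - α) / (1 - β)) * hellinger β μ ν := by
  refine ⟨div_mul_hellinger_le_hellinger μ ν hμ0 hν0 hν1 hα hαβ.le (by linarith), ?_⟩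
  have hswap := div_mul_hellinger_le_hellinger ν μ hν0 hμ0 hμ1
    (α := 1 - β) (β := 1 - α) (by linarith) (by linarith) (by linarith)
  rw [hellinger_one_sub_comm, hellinger_one_sub_comm] at hswap
  have hβ1 : 1 - β ≠ 0 := by linarith
  have hα1 : 1 - α ≠ 0 := by linarith
  calc hellinger α μ ν = (1 - α) / (1 - β) * ((1 - β) / (1 - α) * hellinger α μ ν) := by
        field_simp
    _ ≤ (1 - α) / (1 - β) * hellinger β μ ν := by
        gcongr
        exact div_nonneg (by linarith) (by linarith)
end

section
/- Fix π ∈ (0,1/2], δ ∈ (0,π), and λ* = log((1−π)/δ) / (log((1−π)/δ) + log(π/δ)). Then for all (p,q) ∈ [0,1]² with e_π(Ber(p),Ber(q)) = δ, the Bernoulli Hellinger affinity satisfies β_{λ*}(p,q) ≤ 2 (δ/π)^{λ*}. -/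
open Real

/-- The optimal exponent λ* of the one-shot Bayes error lower bound. -/
noncomputable def lambdaStar (pr δ : ℝ) : ℝ :=
  Real.log ((1 - pr) / δ) / (Real.log ((1 - pr) / δ) + Real.log (pr / δ))

/-- Bayes error for a pair of Bernoulli distributions Ber(p), Ber(q) with prior pr. -/
noncomputable def bayesErrB (pr p q : ℝ) : ℝ :=
  min (pr * p) ((1 - pr) * q) + min (pr * (1 - p)) ((1 - pr) * (1 - q))

/-- Hellinger-λ affinity for Bernoulli distributions. -/
noncomputable def betaB (l p q : ℝ) : ℝ :=
  p ^ l * q ^ (1 - l) + (1 - p) ^ l * (1 - q) ^ (1 - l)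

open Set

/-! Each of the two summands `a ^ λ * b ^ (1 - λ)` of the affinity comes from a pair `(a, b)` with
`min (π a) ((1 - π) b) ≤ δ`, so either `a ≤ δ / π` or `b ≤ δ / (1 - π)`; bounding the other factor by `1`
gives `a ^ λ * b ^ (1 - λ) ≤ max ((δ / π) ^ λ) ((δ / (1 - π)) ^ (1 - λ))`. The exponent `λ*` is exactly
the one that makes the two entries of this maximum equal. -/

lemma rpow_mul_rpow_le_max_of_min_le {s t a b δ l : ℝ} (hs : 0 < s) (ht : 0 < t)
    (ha : a ∈ Icc 0 1) (hb : b ∈ Icc 0 1) (hl : l ∈ Icc 0 1) (h : min (s * a) (t * b) ≤ δ) :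
    a ^ l * b ^ (1 - l) ≤ max ((δ / s) ^ l) ((δ / t) ^ (1 - l)) := by
  have hl' : 0 ≤ 1 - l := sub_nonneg.2 hl.2
  rcases min_le_iff.1 h with hsa | htb
  · have had : a ≤ δ / s := by rw [le_div_iff₀ hs]; linarith
    calc a ^ l * b ^ (1 - l) ≤ (δ / s) ^ l * 1 :=
          mul_le_mul (rpow_le_rpow ha.1 had hl.1) (rpow_le_one hb.1 hb.2 hl')
            (rpow_nonneg hb.1 _) (rpow_nonneg (ha.1.trans had) _)
      _ ≤ _ := (mul_one _).trans_le (le_max_left _ _)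
  · have hbd : b ≤ δ / t := by rw [le_div_iff₀ ht]; linarith
    calc a ^ l * b ^ (1 - l) ≤ 1 * (δ / t) ^ (1 - l) :=
          mul_le_mul (rpow_le_one ha.1 ha.2 hl.1) (rpow_le_rpow hb.1 hbd hl')
            (rpow_nonneg hb.1 _) zero_le_one
      _ ≤ _ := (one_mul _).trans_le (le_max_right _ _)

lemma lambdaStar_mem_Icc {pr δ : ℝ} (hδ : 0 < δ) (hδpr : δ < pr) (hδpr' : δ < 1 - pr) :
    lambdaStar pr δ ∈ Icc 0 1 := by
  have hL : 0 < log ((1 - pr) / δ) := log_pos ((one_lt_div hδ).2 hδpr')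
  have hM : 0 < log (pr / δ) := log_pos ((one_lt_div hδ).2 hδpr)
  exact ⟨by unfold lambdaStar; positivity, (div_le_one (by positivity)).2 (by linarith)⟩

lemma rpow_one_sub_lambdaStar_eq {pr δ : ℝ} (hδ : 0 < δ) (hpr : 0 < pr) (hpr' : pr < 1)
    (hLM : log ((1 - pr) / δ) + log (pr / δ) ≠ 0) :
    (δ / (1 - pr)) ^ (1 - lambdaStar pr δ) = (δ / pr) ^ lambdaStar pr δ := by
  have h1pr : 0 < 1 - pr := sub_pos.2 hpr'
  rw [rpow_def_of_pos (by positivity), rpow_def_of_pos (by positivity),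
    ← inv_div (1 - pr) δ, ← inv_div pr δ, log_inv, log_inv, lambdaStar]
  congr 1
  field_simp
  ring

lemma min_le_bayesErrB_left {pr p q : ℝ} (hpr : pr ∈ Icc 0 1) (hp : p ≤ 1) (hq : q ≤ 1) :
    min (pr * p) ((1 - pr) * q) ≤ bayesErrB pr p q := by
  have : 0 ≤ min (pr * (1 - p)) ((1 - pr) * (1 - q)) :=
    le_min (mul_nonneg hpr.1 (by linarith)) (mul_nonneg (by linarith [hpr.2]) (by linarith))
  unfold bayesErrB
  linarith

lemma min_le_bayesErrB_right {pr p q : ℝ} (hpr : pr ∈ Icc 0 1) (hp : 0 ≤ p) (hq : 0 ≤ q) :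
    min (pr * (1 - p)) ((1 - pr) * (1 - q)) ≤ bayesErrB pr p q := by
  have : 0 ≤ min (pr * p) ((1 - pr) * q) :=
    le_min (mul_nonneg hpr.1 hp) (mul_nonneg (by linarith [hpr.2]) hq)
  unfold bayesErrB
  linarith

theorem bernoulli_affinity_upper_bound (pr δ : ℝ)
    (hpr : pr ∈ Set.Ioc (0 : ℝ) (1 / 2)) (hδ : δ ∈ Set.Ioo (0 : ℝ) pr)
    (p q : ℝ) (hp : p ∈ Set.Icc (0 : ℝ) 1) (hq : q ∈ Set.Icc (0 : ℝ) 1)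
    (he : bayesErrB pr p q = δ) :
    betaB (lambdaStar pr δ) p q ≤ 2 * (δ / pr) ^ lambdaStar pr δ := by
  obtain ⟨hpr0, hpr2⟩ := hpr
  obtain ⟨hδ0, hδpr⟩ := hδ
  have hpr1 : pr ∈ Icc 0 1 := ⟨hpr0.le, by linarith⟩
  have hδpr' : δ < 1 - pr := by linarith
  have hl := lambdaStar_mem_Icc hδ0 hδpr hδpr'
  have hmax : max ((δ / pr) ^ lambdaStar pr δ) ((δ / (1 - pr)) ^ (1 - lambdaStar pr δ))
      = (δ / pr) ^ lambdaStar pr δ := by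
    rw [rpow_one_sub_lambdaStar_eq hδ0 hpr0 (by linarith)
      (by linarith [log_pos ((one_lt_div hδ0).2 hδpr), log_pos ((one_lt_div hδ0).2 hδpr')]),
      max_self]
  have hone_sub {x : ℝ} (hx : x ∈ Icc (0 : ℝ) 1) : 1 - x ∈ Icc (0 : ℝ) 1 :=
    ⟨by linarith [hx.2], by linarith [hx.1]⟩
  have h₁ := rpow_mul_rpow_le_max_of_min_le hpr0 (by linarith) hp hq hl
    (he ▸ min_le_bayesErrB_left hpr1 hp.2 hq.2)
  have h₂ := rpow_mul_rpow_le_max_of_min_le hpr0 (by linarith) (hone_sub hp) (hone_sub hq) hl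
    (he ▸ min_le_bayesErrB_right hpr1 hp.1 hq.1)
  rw [hmax] at h₁ h₂
  unfold betaB
  linarith
end

section
/- Fix π ∈ (0,1/2], δ ∈ (0,π), and λ* = log((1−π)/δ) / (log((1−π)/δ) + log(π/δ)). For all (p,q) ∈ [0,1]² with e_π(Ber(p),Ber(q)) = δ, we have β_{λ*}(p,q) ≤ (δ/π)^{λ*} (2 − δ/(1−π)). -/
open Real

private lemma amgm2 (l x y : ℝ) (hl0 : 0 ≤ l) (hl1 : l ≤ 1) (hx : 0 ≤ x) (hy : 0 ≤ y) :
    x ^ l * y ^ (1 - l) ≤ l * x + (1 - l) * y :=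
  Real.geom_mean_le_arith_mean2_weighted hl0 (by linarith) hx hy (by ring)

private lemma core_lin (a c d l : ℝ) (ha0 : 0 ≤ a) (ha1 : a ≤ 1) (hl0 : 0 ≤ l) (hl1 : l ≤ 1)
    (hd0 : 0 ≤ d) (hdc : d ≤ c) (hc1 : c ≤ 1) :
    l * a + (1 - l) * (1 - (1 - a) * d) + (l * (1 - a * c) + (1 - l) * (1 - a)) ≤ 2 - d := by
  nlinarith [mul_nonneg ha0 (sub_nonneg.2 hdc),
    mul_nonneg (mul_nonneg (sub_nonneg.2 hl1) ha0) (sub_nonneg.2 hc1),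
    mul_nonneg (mul_nonneg hl0 (sub_nonneg.2 ha1)) (sub_nonneg.2 (hdc.trans hc1))]

private lemma case_bound (pr δ l p q : ℝ) (hpr0 : 0 < pr) (hpr1 : pr ≤ 1 / 2)
    (hδ0 : 0 < δ) (hδπ : δ < pr) (hp0 : 0 ≤ p) (hp1 : p ≤ 1) (hq0 : 0 ≤ q) (hq1 : q ≤ 1)
    (hl0 : 0 ≤ l) (hl1 : l ≤ 1) (hK : (δ / pr) ^ l = (δ / (1 - pr)) ^ (1 - l))
    (he : pr * p + (1 - pr) * (1 - q) = δ) :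
    p ^ l * q ^ (1 - l) + (1 - p) ^ l * (1 - q) ^ (1 - l) ≤
      (δ / pr) ^ l * (2 - δ / (1 - pr)) := by
  have h1pr : (0:ℝ) < 1 - pr := by linarith
  have hδne : δ ≠ 0 := ne_of_gt hδ0
  set a := pr * p / δ with hadef
  have ha0 : 0 ≤ a := div_nonneg (mul_nonneg hpr0.le hp0) hδ0.le
  have ha1 : a ≤ 1 := by
    rw [hadef, div_le_one hδ0]
    nlinarith [mul_nonneg h1pr.le (by linarith : (0:ℝ) ≤ 1 - q)]
  have hpe : p = a * (δ / pr) := by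
    rw [hadef]; field_simp
  have hqe : 1 - q = (1 - a) * (δ / (1 - pr)) := by
    rw [hadef]; field_simp; nlinarith [he]
  have hKnn : 0 ≤ (δ / pr) ^ l := Real.rpow_nonneg (div_nonneg hδ0.le hpr0.le) l
  have t1 : p ^ l * q ^ (1 - l) ≤ (δ / pr) ^ l * (l * a + (1 - l) * q) := by
    calc p ^ l * q ^ (1 - l) = (a * (δ / pr)) ^ l * q ^ (1 - l) := by rw [← hpe]
      _ = (δ / pr) ^ l * (a ^ l * q ^ (1 - l)) := by
          rw [Real.mul_rpow ha0 (div_nonneg hδ0.le hpr0.le)]; ring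
      _ ≤ (δ / pr) ^ l * (l * a + (1 - l) * q) :=
          mul_le_mul_of_nonneg_left (amgm2 l a q hl0 hl1 ha0 hq0) hKnn
  have t2 : (1 - p) ^ l * (1 - q) ^ (1 - l) ≤
      (δ / pr) ^ l * (l * (1 - p) + (1 - l) * (1 - a)) := by
    calc (1 - p) ^ l * (1 - q) ^ (1 - l)
        = (1 - p) ^ l * ((1 - a) * (δ / (1 - pr))) ^ (1 - l) := by rw [← hqe]
      _ = (δ / (1 - pr)) ^ (1 - l) * ((1 - p) ^ l * (1 - a) ^ (1 - l)) := by
          rw [Real.mul_rpow (by linarith) (div_nonneg hδ0.le h1pr.le)]; ring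
      _ = (δ / pr) ^ l * ((1 - p) ^ l * (1 - a) ^ (1 - l)) := by rw [hK]
      _ ≤ (δ / pr) ^ l * (l * (1 - p) + (1 - l) * (1 - a)) :=
          mul_le_mul_of_nonneg_left
            (amgm2 l (1 - p) (1 - a) hl0 hl1 (by linarith) (by linarith)) hKnn
  have hcore : l * a + (1 - l) * q + (l * (1 - p) + (1 - l) * (1 - a)) ≤ 2 - δ / (1 - pr) := by
    have hdc : δ / (1 - pr) ≤ δ / pr := by
      rw [div_le_div_iff₀ h1pr hpr0]; nlinarith
    have hc1 : δ / pr ≤ 1 := (div_le_one hpr0).2 hδπ.le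
    have hd0 : 0 ≤ δ / (1 - pr) := div_nonneg hδ0.le h1pr.le
    have hq' : q = 1 - (1 - a) * (δ / (1 - pr)) := by linarith
    have hp' : (1:ℝ) - p = 1 - a * (δ / pr) := by linarith
    rw [hq', hp']
    exact core_lin a (δ / pr) (δ / (1 - pr)) l ha0 ha1 hl0 hl1 hd0 hdc hc1
  calc p ^ l * q ^ (1 - l) + (1 - p) ^ l * (1 - q) ^ (1 - l)
      ≤ (δ / pr) ^ l * ((l * a + (1 - l) * q) + (l * (1 - p) + (1 - l) * (1 - a))) := by
        rw [mul_add]; exact add_le_add t1 t2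
    _ ≤ (δ / pr) ^ l * (2 - δ / (1 - pr)) := by
        apply mul_le_mul_of_nonneg_left _ hKnn
        linarith [hcore]

theorem bernoulli_affinity_sharper_bound (pr δ : ℝ)
    (hpr : pr ∈ Set.Ioc (0 : ℝ) (1 / 2)) (hδ : δ ∈ Set.Ioo (0 : ℝ) pr)
    (p q : ℝ) (hp : p ∈ Set.Icc (0 : ℝ) 1) (hq : q ∈ Set.Icc (0 : ℝ) 1)
    (he : bayesErrB pr p q = δ) :
    betaB (lambdaStar pr δ) p q ≤ (δ / pr) ^ lambdaStar pr δ * (2 - δ / (1 - pr)) := by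
  obtain ⟨hpr0, hpr1⟩ := hpr
  obtain ⟨hδ0, hδπ⟩ := hδ
  obtain ⟨hp0, hp1⟩ := hp
  obtain ⟨hq0, hq1⟩ := hq
  have h1pr : (0:ℝ) < 1 - pr := by linarith
  have hδ1p : δ < 1 - pr := by linarith
  set l := lambdaStar pr δ with hldef
  have hA : 0 < Real.log ((1 - pr) / δ) := Real.log_pos ((one_lt_div hδ0).2 hδ1p)
  have hB : 0 < Real.log (pr / δ) := Real.log_pos ((one_lt_div hδ0).2 hδπ)
  have hl0 : 0 < l := by
    rw [hldef, lambdaStar]; exact div_pos hA (by linarith)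
  have hl1 : l < 1 := by
    rw [hldef, lambdaStar, div_lt_one (by linarith)]; linarith
  have hlb : l * Real.log (pr / δ) = (1 - l) * Real.log ((1 - pr) / δ) := by
    rw [hldef, lambdaStar]
    have hne : Real.log ((1 - pr) / δ) + Real.log (pr / δ) ≠ 0 := by positivity
    field_simp
    ring
  have hK : (δ / pr) ^ l = (δ / (1 - pr)) ^ (1 - l) := by
    rw [Real.rpow_def_of_pos (div_pos hδ0 hpr0),
      Real.rpow_def_of_pos (div_pos hδ0 h1pr)]
    congr 1
    have e1 : Real.log (δ / pr) = -Real.log (pr / δ) := by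
      rw [← Real.log_inv, inv_div]
    have e2 : Real.log (δ / (1 - pr)) = -Real.log ((1 - pr) / δ) := by
      rw [← Real.log_inv, inv_div]
    rw [e1, e2]
    linear_combination -hlb
  unfold bayesErrB at he
  unfold betaB
  rcases le_total (pr * p) ((1 - pr) * q) with h1 | h1 <;>
    rcases le_total (pr * (1 - p)) ((1 - pr) * (1 - q)) with h2 | h2
  · -- both mins are the pr-side: δ = pr, contradiction
    rw [min_eq_left h1, min_eq_left h2] at he
    exfalso; nlinarith
  · -- min1 = pr*p, min2 = (1-pr)*(1-q) : case C
    rw [min_eq_left h1, min_eq_right h2] at he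
    exact case_bound pr δ l p q hpr0 hpr1 hδ0 hδπ hp0 hp1 hq0 hq1 hl0.le hl1.le hK he
  · -- min1 = (1-pr)*q, min2 = pr*(1-p) : case D
    rw [min_eq_right h1, min_eq_left h2] at he
    have he' : pr * (1 - p) + (1 - pr) * (1 - (1 - q)) = δ := by ring_nf; ring_nf at he; linarith
    have := case_bound pr δ l (1 - p) (1 - q) hpr0 hpr1 hδ0 hδπ (by linarith) (by linarith)
      (by linarith) (by linarith) hl0.le hl1.le hK he'
    have h1p : (1:ℝ) - (1 - p) = p := by ring
    have h1q : (1:ℝ) - (1 - q) = q := by ring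
    rw [h1p, h1q] at this
    linarith
  · -- both mins are the (1-pr)-side: δ = 1-pr, contradiction
    rw [min_eq_right h1, min_eq_right h2] at he
    exfalso; nlinarith
end

section
/- Let P, Q be probability distributions on a finite set X, π ∈ (0,1/2], and suppose e_π(P,Q) = δ ∈ (0,π). Then with λ* = log((1−π)/δ)/(log((1−π)/δ)+log(π/δ)), we have δ ≥ (1/4) π^{λ*} (1−π)^{1−λ*} (β_{λ*}(P,Q))². -/
open Real Finset

/-- Optimal one-shot Bayes error with prior pr. -/
noncomputable def bayesErr {X : Type*} [Fintype X] (pr : ℝ) (P Q : X → ℝ) : ℝ :=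
  ∑ x, min (pr * P x) ((1 - pr) * Q x)

/-!
Write `a = π P` and `b = (1 - π) Q`, so that `δ = ∑ min (a, b)`. Splitting the affinity sum
along `{a ≤ b}` and applying Hölder on each part gives
`π^λ (1-π)^(1-λ) β_λ ≤ δ^λ (1-π)^(1-λ) + π^λ δ^(1-λ)` for every `λ ∈ (0,1)`.
The product of the two terms on the right is `δ π^λ (1-π)^(1-λ)`, and `λ*` is exactly the
exponent that makes them equal; squaring the inequality then gives the bound.
-/

lemma Real.sum_rpow_mul_rpow_one_sub_le {ι : Type*} (s : Finset ι) {f g : ι → ℝ}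
    (hf : ∀ i ∈ s, 0 ≤ f i) (hg : ∀ i ∈ s, 0 ≤ g i) {l : ℝ} (hl₀ : 0 < l) (hl₁ : l < 1) :
    ∑ i ∈ s, f i ^ l * g i ^ (1 - l) ≤ (∑ i ∈ s, f i) ^ l * (∑ i ∈ s, g i) ^ (1 - l) := by
  have hl₁' : 0 < 1 - l := sub_pos.2 hl₁
  have H := Real.inner_le_Lp_mul_Lq_of_nonneg s (Real.HolderConjugate.inv_one_sub_inv hl₀ hl₁)
    (fun i hi => rpow_nonneg (hf i hi) l) (fun i hi => rpow_nonneg (hg i hi) (1 - l))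
  rwa [sum_congr rfl fun i hi => rpow_rpow_inv (hf i hi) hl₀.ne',
    sum_congr rfl fun i hi => rpow_rpow_inv (hg i hi) hl₁'.ne', one_div, one_div,
    inv_inv, inv_inv] at H

lemma Real.sum_rpow_mul_rpow_one_sub_le_of_sum_le {ι : Type*} (s : Finset ι) {f g : ι → ℝ}
    (hf : ∀ i ∈ s, 0 ≤ f i) (hg : ∀ i ∈ s, 0 ≤ g i) {l u v : ℝ} (hl₀ : 0 < l) (hl₁ : l < 1)
    (hu : ∑ i ∈ s, f i ≤ u) (hv : ∑ i ∈ s, g i ≤ v) :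
    ∑ i ∈ s, f i ^ l * g i ^ (1 - l) ≤ u ^ l * v ^ (1 - l) := by
  have hf₀ : 0 ≤ ∑ i ∈ s, f i := sum_nonneg hf
  have hg₀ : 0 ≤ ∑ i ∈ s, g i := sum_nonneg hg
  have hu₀ : 0 ≤ u := hf₀.trans hu
  calc ∑ i ∈ s, f i ^ l * g i ^ (1 - l)
      ≤ (∑ i ∈ s, f i) ^ l * (∑ i ∈ s, g i) ^ (1 - l) :=
        Real.sum_rpow_mul_rpow_one_sub_le s hf hg hl₀ hl₁
    _ ≤ u ^ l * v ^ (1 - l) := by gcongr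

lemma betaAff_le_of_sum_min_le {X : Type*} [Fintype X] {a b : X → ℝ}
    (ha : ∀ x, 0 ≤ a x) (hb : ∀ x, 0 ≤ b x) {l p q δ : ℝ} (hl₀ : 0 < l) (hl₁ : l < 1)
    (hp : ∑ x, a x ≤ p) (hq : ∑ x, b x ≤ q) (hδ : ∑ x, min (a x) (b x) ≤ δ) :
    betaAff l a b ≤ δ ^ l * q ^ (1 - l) + p ^ l * δ ^ (1 - l) := by
  classical
  set E := univ.filter fun x => a x ≤ b x
  have hmin : ∀ s : Finset X, ∑ x ∈ s, min (a x) (b x) ≤ δ := fun s =>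
    (sum_le_univ_sum_of_nonneg fun x => le_min (ha x) (hb x)).trans hδ
  have haE : ∑ x ∈ E, a x ≤ δ := by
    refine le_of_eq_of_le (sum_congr rfl fun x hx => ?_) (hmin E)
    exact (min_eq_left (mem_filter.1 hx).2).symm
  have hbEc : ∑ x ∈ Eᶜ, b x ≤ δ := by
    refine le_of_eq_of_le (sum_congr rfl fun x hx => ?_) (hmin Eᶜ)
    simp only [E, mem_compl, mem_filter, mem_univ, true_and, not_le] at hx
    exact (min_eq_right hx.le).symm
  rw [betaAff, ← sum_add_sum_compl E]
  gcongr
  · exact Real.sum_rpow_mul_rpow_one_sub_le_of_sum_le E (fun x _ => ha x) (fun x _ => hb x) hl₀ hl₁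
      haE ((sum_le_univ_sum_of_nonneg hb).trans hq)
  · exact Real.sum_rpow_mul_rpow_one_sub_le_of_sum_le Eᶜ (fun x _ => ha x) (fun x _ => hb x) hl₀ hl₁
      ((sum_le_univ_sum_of_nonneg ha).trans hp) hbEc

lemma betaAff_const_mul {X : Type*} [Fintype X] {P Q : X → ℝ} (hP : ∀ x, 0 ≤ P x)
    (hQ : ∀ x, 0 ≤ Q x) {s t : ℝ} (hs : 0 ≤ s) (ht : 0 ≤ t) (l : ℝ) :
    betaAff l (fun x => s * P x) (fun x => t * Q x) = s ^ l * t ^ (1 - l) * betaAff l P Q := by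
  simp only [betaAff, mul_sum, mul_rpow hs (hP _), mul_rpow ht (hQ _)]
  exact sum_congr rfl fun x _ => by ring

lemma lambdaStar_mem_Ioo {pr δ : ℝ} (hA : 0 < Real.log ((1 - pr) / δ))
    (hB : 0 < Real.log (pr / δ)) : lambdaStar pr δ ∈ Set.Ioo 0 1 :=
  ⟨div_pos hA (by linarith), (div_lt_one (by linarith)).2 (by linarith)⟩

lemma rpow_lambdaStar_balance {pr δ : ℝ} (hδ₀ : 0 < δ) (hp : 0 < pr) (hq : 0 < 1 - pr)
    (hAB : Real.log ((1 - pr) / δ) + Real.log (pr / δ) ≠ 0) :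
    δ ^ lambdaStar pr δ * (1 - pr) ^ (1 - lambdaStar pr δ) =
      pr ^ lambdaStar pr δ * δ ^ (1 - lambdaStar pr δ) := by
  set l := lambdaStar pr δ
  have hexp : ((1 - pr) / δ) ^ (1 - l) = (pr / δ) ^ l := by
    rw [rpow_def_of_pos (div_pos hq hδ₀), rpow_def_of_pos (div_pos hp hδ₀)]
    congr 1
    simp only [l, lambdaStar]
    field_simp
    ring
  calc δ ^ l * (1 - pr) ^ (1 - l)
      = δ ^ l * δ ^ (1 - l) * ((1 - pr) / δ) ^ (1 - l) := by
        rw [mul_assoc, ← mul_rpow hδ₀.le (div_pos hq hδ₀).le, mul_div_cancel₀ _ hδ₀.ne']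
    _ = δ ^ l * (pr / δ) ^ l * δ ^ (1 - l) := by rw [hexp]; ring
    _ = pr ^ l * δ ^ (1 - l) := by
        rw [← mul_rpow hδ₀.le (div_pos hp hδ₀).le, mul_div_cancel₀ _ hδ₀.ne']

theorem one_shot_lower_bound {X : Type*} [Fintype X]
    (P Q : X → ℝ) (hP0 : ∀ x, 0 ≤ P x) (hQ0 : ∀ x, 0 ≤ Q x)
    (hP1 : ∑ x, P x = 1) (hQ1 : ∑ x, Q x = 1)
    (pr δ : ℝ) (hpr : pr ∈ Set.Ioc (0 : ℝ) (1 / 2)) (hδ : δ ∈ Set.Ioo (0 : ℝ) pr)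
    (he : bayesErr pr P Q = δ) :
    δ ≥ (1 / 4) * pr ^ lambdaStar pr δ * (1 - pr) ^ (1 - lambdaStar pr δ) *
      (betaAff (lambdaStar pr δ) P Q) ^ 2 := by
  obtain ⟨hp, hp2⟩ := hpr
  obtain ⟨hδ₀, hδp⟩ := hδ
  have hq : 0 < 1 - pr := by linarith
  have hA : 0 < Real.log ((1 - pr) / δ) := Real.log_pos ((one_lt_div hδ₀).2 (by linarith))
  have hB : 0 < Real.log (pr / δ) := Real.log_pos ((one_lt_div hδ₀).2 hδp)
  obtain ⟨hl₀, hl₁⟩ := lambdaStar_mem_Ioo hA hB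
  set l := lambdaStar pr δ
  set c := pr ^ l * (1 - pr) ^ (1 - l)
  set m := δ ^ l * (1 - pr) ^ (1 - l)
  have hc : 0 < c := by positivity
  have hβ : 0 ≤ betaAff l P Q :=
    sum_nonneg fun x _ => mul_nonneg (rpow_nonneg (hP0 x) l) (rpow_nonneg (hQ0 x) (1 - l))
  have hbal : m = pr ^ l * δ ^ (1 - l) :=
    rpow_lambdaStar_balance hδ₀ hp hq (add_pos hA hB).ne'
  have hcβ : c * betaAff l P Q ≤ 2 * m := by
    rw [← betaAff_const_mul hP0 hQ0 hp.le hq.le, two_mul]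
    nth_rw 2 [hbal]
    refine betaAff_le_of_sum_min_le (fun x => mul_nonneg hp.le (hP0 x))
      (fun x => mul_nonneg hq.le (hQ0 x)) hl₀ hl₁ ?_ ?_ he.le <;> simp [← mul_sum, hP1, hQ1]
  have hm2 : m ^ 2 = δ * c := by
    calc m ^ 2 = δ ^ l * δ ^ (1 - l) * c := by rw [sq]; nth_rw 2 [hbal]; ring
      _ = δ * c := by rw [← rpow_add hδ₀, add_sub_cancel, rpow_one]
  have hsq : c * (c * betaAff l P Q ^ 2) ≤ c * (4 * δ) :=
    calc c * (c * betaAff l P Q ^ 2) = (c * betaAff l P Q) ^ 2 := by ring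
      _ ≤ (2 * m) ^ 2 := pow_le_pow_left₀ (mul_nonneg hc.le hβ) hcβ 2
      _ = c * (4 * δ) := by rw [mul_pow, hm2]; ring
  linarith [le_of_mul_le_mul_left hsq hc]
end

section
/- For probability distributions P, Q on a finite set X, let A = {x ∈ X : π P(x) ≤ (1−π) Q(x)}, p_A = P(A), q_A = Q(A). Then e_π(P,Q) = e_π(Ber(p_A), Ber(q_A)) = π p_A + (1−π)(1−q_A). -/
open Real Finset

theorem bayes_error_binary_quantisation {X : Type*} [Fintype X] [DecidableEq X]
    (pr : ℝ) (hpr : pr ∈ Set.Ioo (0 : ℝ) 1)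
    (P Q : X → ℝ) (hP0 : ∀ x, 0 ≤ P x) (hQ0 : ∀ x, 0 ≤ Q x)
    (hP1 : ∑ x, P x = 1) (hQ1 : ∑ x, Q x = 1) :
    let A : Finset X := Finset.univ.filter (fun x => pr * P x ≤ (1 - pr) * Q x)
    let pA : ℝ := ∑ x ∈ A, P x
    let qA : ℝ := ∑ x ∈ A, Q x
    bayesErr pr P Q = bayesErrB pr pA qA ∧
      bayesErr pr P Q = pr * pA + (1 - pr) * (1 - qA) := by
  intro A pA qA
  have hAc : ∑ x ∈ Aᶜ, Q x = 1 - qA := by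
    have := Finset.sum_add_sum_compl A Q
    rw [hQ1] at this; linarith
  have hAcP : ∑ x ∈ Aᶜ, P x = 1 - pA := by
    have := Finset.sum_add_sum_compl A P
    rw [hP1] at this; linarith
  have key : bayesErr pr P Q = pr * pA + (1 - pr) * (1 - qA) := by
    unfold bayesErr
    rw [← Finset.sum_add_sum_compl A]
    have h1 : ∑ x ∈ A, min (pr * P x) ((1 - pr) * Q x) = ∑ x ∈ A, pr * P x := by
      apply Finset.sum_congr rfl
      intro x hx
      simp only [A, Finset.mem_filter] at hx
      exact min_eq_left hx.2
    have h2 : ∑ x ∈ Aᶜ, min (pr * P x) ((1 - pr) * Q x) = ∑ x ∈ Aᶜ, (1 - pr) * Q x := by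
      apply Finset.sum_congr rfl
      intro x hx
      simp only [A, Finset.mem_compl, Finset.mem_filter, Finset.mem_univ, true_and,
        not_le] at hx
      exact min_eq_right hx.le
    rw [h1, h2, ← Finset.mul_sum, ← Finset.mul_sum, hAc]
  have hineq1 : pr * pA ≤ (1 - pr) * qA := by
    have : ∑ x ∈ A, pr * P x ≤ ∑ x ∈ A, (1 - pr) * Q x := by
      apply Finset.sum_le_sum
      intro x hx
      simp only [A, Finset.mem_filter] at hx
      exact hx.2
    rw [← Finset.mul_sum, ← Finset.mul_sum] at this
    exact this
  have hineq2 : (1 - pr) * (1 - qA) ≤ pr * (1 - pA) := by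
    have : ∑ x ∈ Aᶜ, (1 - pr) * Q x ≤ ∑ x ∈ Aᶜ, pr * P x := by
      apply Finset.sum_le_sum
      intro x hx
      simp only [A, Finset.mem_compl, Finset.mem_filter, Finset.mem_univ, true_and,
        not_le] at hx
      exact hx.le
    rw [← Finset.mul_sum, ← Finset.mul_sum, hAc, hAcP] at this
    exact this
  refine ⟨?_, key⟩
  rw [key]
  unfold bayesErrB
  rw [min_eq_left hineq1, min_eq_right hineq2]
end

section
/- Let P, Q be probability distributions on a finite set X and γ ∈ (0,1]. Define distributions P̃, Q̃ on X ∪ {a} (for a fresh point a ∉ X) by P̃(x) = γP(x) and Q̃(x) = γQ(x) for x ∈ X, and P̃(a) = Q̃(a) = 1−γ. Then for any λ ∈ (0,1), β_λ(P̃,Q̃) = γ β_λ(P,Q) + (1−γ) ≥ (β_λ(P,Q))^γ ≥ β_λ(P,Q). -/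
open Real Finset

/-- γ-mixture of a distribution on `X` with a point mass 1-γ on the fresh point
`none` of `Option X`. -/
noncomputable def mixFresh {X : Type*} (γ : ℝ) (P : X → ℝ) : Option X → ℝ :=
  fun o => o.elim (1 - γ) (fun x => γ * P x)

theorem affinity_of_mixture {X : Type*} [Fintype X]
    (P Q : X → ℝ) (hP0 : ∀ x, 0 ≤ P x) (hQ0 : ∀ x, 0 ≤ Q x)
    (hP1 : ∑ x, P x = 1) (hQ1 : ∑ x, Q x = 1)
    (γ : ℝ) (hγ : γ ∈ Set.Ioc (0 : ℝ) 1) (l : ℝ) (hl : l ∈ Set.Ioo (0 : ℝ) 1) :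
    betaAff l (mixFresh γ P) (mixFresh γ Q) = γ * betaAff l P Q + (1 - γ) ∧
      γ * betaAff l P Q + (1 - γ) ≥ (betaAff l P Q) ^ γ ∧
      (betaAff l P Q) ^ γ ≥ betaAff l P Q := by
  obtain ⟨hγ0, hγ1⟩ := hγ
  obtain ⟨hl0, hl1⟩ := hl
  have hl1' : (0:ℝ) ≤ 1 - l := by linarith
  have hβ0 : 0 ≤ betaAff l P Q := by
    apply Finset.sum_nonneg
    intro x _
    exact mul_nonneg (rpow_nonneg (hP0 x) _) (rpow_nonneg (hQ0 x) _)
  have hβ1 : betaAff l P Q ≤ 1 := by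
    calc betaAff l P Q ≤ ∑ x, (l * P x + (1 - l) * Q x) := by
          apply Finset.sum_le_sum
          intro x _
          exact Real.geom_mean_le_arith_mean2_weighted hl0.le hl1' (hP0 x) (hQ0 x)
            (by ring)
      _ = 1 := by rw [Finset.sum_add_distrib, ← Finset.mul_sum, ← Finset.mul_sum,
            hP1, hQ1]; ring
  refine ⟨?_, ?_, ?_⟩
  · have hsum : ∀ (o : Option X), mixFresh γ P o ^ l * mixFresh γ Q o ^ (1 - l) =
        Option.elim o (1 - γ) (fun x => γ * (P x ^ l * Q x ^ (1 - l))) := by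
      rintro (_ | x)
      · simp only [mixFresh, Option.elim]
        rw [← Real.rpow_add' (by linarith) (by norm_num)]
        simp
      · simp only [mixFresh, Option.elim]
        rw [Real.mul_rpow hγ0.le (hP0 x), Real.mul_rpow hγ0.le (hQ0 x)]
        rw [show γ ^ l * P x ^ l * (γ ^ (1 - l) * Q x ^ (1 - l)) =
            (γ ^ l * γ ^ (1 - l)) * (P x ^ l * Q x ^ (1 - l)) by ring,
          ← Real.rpow_add hγ0]
        simp
    unfold betaAff
    rw [Fintype.sum_congr _ _ hsum, Fintype.sum_option]
    simp only [Option.elim]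
    rw [← Finset.mul_sum]
    ring_nf
  · have := Real.geom_mean_le_arith_mean2_weighted hγ0.le (by linarith : (0:ℝ) ≤ 1 - γ)
      hβ0 zero_le_one (by ring)
    simpa using this
  · rcases eq_or_lt_of_le hβ0 with h | h
    · rw [← h, Real.zero_rpow hγ0.ne']
    · calc betaAff l P Q = betaAff l P Q ^ (1:ℝ) := (Real.rpow_one _).symm
        _ ≤ betaAff l P Q ^ γ := Real.rpow_le_rpow_of_exponent_ge h hβ1 hγ1
end

section
/- Binary reverse data-processing for the heavy part: let D_f be an f-divergence on finite distributions with generator f satisfying C₁x ≤ f(x) ≤ C₂x for all x > b (for constants b, C₁, C₂ > 0). Let P, Q be probability distributions on a finite set X, and let A = {x : P(x)/Q(x) > b} (points with Q(x)=0 and P(x)>0 included in A). If Σ_{x∈A} Q(x) f(P(x)/Q(x)) ≥ (1/2) D_f(P‖Q), then the binary quantiser T mapping A to one symbol and its complement to another satisfies D_f(TP‖TQ) ≥ (C₁/(2C₂)) D_f(P‖Q). -/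
open Real Finset Filter

/-- f-divergence between two distributions on a finite set, with the convention
that points with `Q x = 0` contribute `f'(∞) · P x`. -/
noncomputable def fDiv {X : Type*} [Fintype X] (f : ℝ → ℝ) (fInf : ℝ)
    (P Q : X → ℝ) : ℝ :=
  ∑ x, (if Q x = 0 then fInf * P x else Q x * f (P x / Q x))

theorem binary_reverse_data_processing_heavy_part {X : Type*} [Fintype X]
    [DecidableEq X]
    (f : ℝ → ℝ) (hf_cvx : ConvexOn ℝ (Set.Ici (0 : ℝ)) f) (hf1 : f 1 = 0)
    (hf_nonneg : ∀ x : ℝ, 0 ≤ x → 0 ≤ f x)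
    (b C₁ C₂ : ℝ) (hb : 0 < b) (hC₁ : 0 < C₁) (hC₂ : 0 < C₂)
    (hlin : ∀ x : ℝ, b < x → C₁ * x ≤ f x ∧ f x ≤ C₂ * x)
    (fInf : ℝ) (hfInf : Tendsto (fun x => f x / x) atTop (nhds fInf))
    (P Q : X → ℝ) (hP0 : ∀ x, 0 ≤ P x) (hQ0 : ∀ x, 0 ≤ Q x)
    (hP1 : ∑ x, P x = 1) (hQ1 : ∑ x, Q x = 1) :
    let A : Finset X :=
      Finset.univ.filter (fun x => (Q x = 0 ∧ 0 < P x) ∨ (0 < Q x ∧ b < P x / Q x))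
    let pA : ℝ := ∑ x ∈ A, P x
    let qA : ℝ := ∑ x ∈ A, Q x
    let TP : Bool → ℝ := fun i => if i then pA else 1 - pA
    let TQ : Bool → ℝ := fun i => if i then qA else 1 - qA
    (∑ x ∈ A, (if Q x = 0 then fInf * P x else Q x * f (P x / Q x))
        ≥ (1 / 2) * fDiv f fInf P Q) →
      fDiv f fInf TP TQ ≥ (C₁ / (2 * C₂)) * fDiv f fInf P Q := by
  intro A pA qA TP TQ hHeavy
  have hpA0 : 0 ≤ pA := Finset.sum_nonneg fun x _ => hP0 x
  have hqA0 : 0 ≤ qA := Finset.sum_nonneg fun x _ => hQ0 x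
  have hpA1 : pA ≤ 1 := by
    rw [← hP1]
    exact Finset.sum_le_sum_of_subset_of_nonneg (Finset.subset_univ A)
      (fun x _ _ => hP0 x)
  have hqA1 : qA ≤ 1 := by
    rw [← hQ1]
    exact Finset.sum_le_sum_of_subset_of_nonneg (Finset.subset_univ A)
      (fun x _ _ => hQ0 x)
  have hfInf_le : fInf ≤ C₂ := by
    refine le_of_tendsto hfInf (Filter.eventually_atTop.2 ⟨b + 1, fun x hx => ?_⟩)
    have hbx : b < x := lt_of_lt_of_le (lt_add_one b) hx
    have hx0 : 0 < x := hb.trans hbx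
    rw [div_le_iff₀ hx0]
    exact (hlin x hbx).2
  have hfInf_ge : C₁ ≤ fInf := by
    refine ge_of_tendsto hfInf (Filter.eventually_atTop.2 ⟨b + 1, fun x hx => ?_⟩)
    have hbx : b < x := lt_of_lt_of_le (lt_add_one b) hx
    have hx0 : 0 < x := hb.trans hbx
    rw [le_div_iff₀ hx0]
    exact (hlin x hbx).1
  -- per-point facts on A
  have hmem : ∀ x ∈ A, b * Q x < P x := by
    intro x hx
    simp only [A, Finset.mem_filter, Finset.mem_univ, true_and] at hx
    rcases hx with ⟨hQx, hPx⟩ | ⟨hQx, hr⟩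
    · simpa [hQx] using hPx
    · calc b * Q x < (P x / Q x) * Q x := by
            exact mul_lt_mul_of_pos_right hr hQx
        _ = P x := by field_simp
  have hSA_le : ∑ x ∈ A, (if Q x = 0 then fInf * P x else Q x * f (P x / Q x))
      ≤ C₂ * pA := by
    have : C₂ * pA = ∑ x ∈ A, C₂ * P x := by rw [Finset.mul_sum]
    rw [this]
    refine Finset.sum_le_sum fun x hx => ?_
    by_cases hQx : Q x = 0
    · simp only [hQx, if_true]
      exact mul_le_mul_of_nonneg_right hfInf_le (hP0 x)
    · have hQx' : 0 < Q x := (hQ0 x).lt_of_ne (Ne.symm hQx)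
      have hr : b < P x / Q x := by
        have := hmem x hx
        rw [lt_div_iff₀ hQx']
        linarith [this]
      simp only [hQx, if_false]
      calc Q x * f (P x / Q x) ≤ Q x * (C₂ * (P x / Q x)) :=
            mul_le_mul_of_nonneg_left (hlin _ hr).2 (hQ0 x)
        _ = C₂ * P x := by field_simp
  have hD_le : fDiv f fInf P Q ≤ 2 * C₂ * pA := by
    have := le_trans hHeavy hSA_le
    linarith
  -- lower bound for the true term
  have htrue : C₁ * pA ≤ (if qA = 0 then fInf * pA else qA * f (pA / qA)) := by
    by_cases hq : qA = 0
    · simp only [hq, if_true]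
      exact mul_le_mul_of_nonneg_right hfInf_ge hpA0
    · simp only [hq, if_false]
      have hq' : 0 < qA := hqA0.lt_of_ne (Ne.symm hq)
      have hA_ne : A.Nonempty := by
        by_contra h
        rw [Finset.not_nonempty_iff_eq_empty] at h
        simp only [qA, h, Finset.sum_empty] at hq'
        exact lt_irrefl 0 hq'
      have hlt : b * qA < pA := by
        have : ∑ x ∈ A, b * Q x < ∑ x ∈ A, P x :=
          Finset.sum_lt_sum_of_nonempty hA_ne hmem
        simpa [pA, qA, Finset.mul_sum] using this
      have hr : b < pA / qA := by rw [lt_div_iff₀ hq']; linarith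
      calc C₁ * pA = qA * (C₁ * (pA / qA)) := by field_simp
        _ ≤ qA * f (pA / qA) :=
            mul_le_mul_of_nonneg_left (hlin _ hr).1 hq'.le
  -- lower bound for the false term
  have hfalse : 0 ≤ (if (1 : ℝ) - qA = 0 then fInf * (1 - pA)
      else (1 - qA) * f ((1 - pA) / (1 - qA))) := by
    by_cases hq : (1 : ℝ) - qA = 0
    · simp only [hq, if_true]
      exact mul_nonneg (le_trans hC₁.le hfInf_ge) (by linarith)
    · simp only [hq, if_false]
      have hq' : 0 < 1 - qA := lt_of_le_of_ne (by linarith) (Ne.symm hq)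
      exact mul_nonneg hq'.le (hf_nonneg _ (div_nonneg (by linarith) hq'.le))
  have hTDiv : fDiv f fInf TP TQ
      = (if qA = 0 then fInf * pA else qA * f (pA / qA))
        + (if (1 : ℝ) - qA = 0 then fInf * (1 - pA)
          else (1 - qA) * f ((1 - pA) / (1 - qA))) := by
    simp [fDiv, Fintype.sum_bool, TP, TQ]
  have hfinal : C₁ * pA ≤ fDiv f fInf TP TQ := by
    rw [hTDiv]; linarith
  have hkey : (C₁ / (2 * C₂)) * fDiv f fInf P Q ≤ C₁ * pA := by
    have h1 : (C₁ / (2 * C₂)) * fDiv f fInf P Q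
        ≤ (C₁ / (2 * C₂)) * (2 * C₂ * pA) :=
      mul_le_mul_of_nonneg_left hD_le (by positivity)
    have h2 : (C₁ / (2 * C₂)) * (2 * C₂ * pA) = C₁ * pA := by
      field_simp
    linarith
  linarith
end
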